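/- arXiv:2204.00962 — 7 statements merged into one kernel-verified Lean document; each statement's English description precedes it below -/
import Mathlib

section
/- For every positive integer n, the series \sum_{p=n}^{\infty} \varepsilon_p converges and its sum equals r_n; that is, the family (\varepsilon_p)_{p \ge n} has sum r_n. -/
/-- Error term in Stirling's formula: `n! = √(2π) n^(n+1/2) e^(-n) e^(r_n)`. -/
noncomputable def stirlingErr (n : ℕ) : ℝ :=
  Real.log (n.factorial) - ((n : ℝ) + 1/2) * Real.log n + n - Real.log (Real.sqrt (2 * Real.pi))

/-- Robbins' summand: `ε_p = (p + 1/2) log((p+1)/p) - 1`. -/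
noncomputable def eps (p : ℕ) : ℝ :=
  ((p : ℝ) + 1/2) * Real.log (((p : ℝ) + 1) / p) - 1

/-!
Since `(p+1)! = (p+1)·p!`, one has `ε_p = r_p - r_{p+1}` for every `p`, so the partial sums
of `∑_{p ≥ n} ε_p` are `r_n - r_N`, and `r_N → 0` is Stirling's formula. The series converges
unconditionally because `ε_p ≥ 0` for `p ≥ 1`: there `r_p = log (stirlingSeq p / √π)` and
Mathlib's `stirlingSeq` is decreasing from `1` on.
-/

open Real Filter Topology Finset

theorem hasSum_sub_succ_of_tendsto {G : Type*} [AddCommGroup G] [TopologicalSpace G]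
    [ContinuousSub G] [T2Space G] {f : ℕ → G} {l : G}
    (hs : Summable fun k ↦ f k - f (k + 1)) (hf : Tendsto f atTop (𝓝 l)) :
    HasSum (fun k ↦ f k - f (k + 1)) (f 0 - l) := by
  rw [hs.hasSum_iff_tendsto_nat]
  simpa only [sum_range_sub'] using tendsto_const_nhds.sub hf

theorem hasSum_subtype_le_iff {M : Type*} [AddCommMonoid M] [TopologicalSpace M]
    (f : ℕ → M) (n : ℕ) {a : M} :
    HasSum (fun p : {p : ℕ // n ≤ p} ↦ f p) a ↔ HasSum (fun k ↦ f (k + n)) a :=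
  let e : ℕ ≃ {p : ℕ // n ≤ p} :=
    { toFun k := ⟨k + n, Nat.le_add_left n k⟩
      invFun p := p.1 - n
      left_inv k := Nat.add_sub_cancel k n
      right_inv p := Subtype.ext (Nat.sub_add_cancel p.2) }
  e.hasSum_iff.symm

theorem stirlingErr_eq_log_stirlingSeq_sub {n : ℕ} (hn : n ≠ 0) :
    stirlingErr n = log (Stirling.stirlingSeq n) - log √π := by
  have hn' : (n : ℝ) ≠ 0 := Nat.cast_ne_zero.2 hn
  rw [stirlingErr, Stirling.log_stirlingSeq_formula, log_div hn' (exp_pos 1).ne', log_exp,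
    log_mul two_ne_zero hn', sqrt_eq_rpow, sqrt_eq_rpow, log_rpow (by positivity),
    log_rpow pi_pos, log_mul two_ne_zero pi_pos.ne']
  ring

theorem tendsto_stirlingErr_atTop : Tendsto stirlingErr atTop (𝓝 0) := by
  have hlog : Tendsto (fun n ↦ log (Stirling.stirlingSeq n) - log √π) atTop (𝓝 0) := by
    simpa using ((continuousAt_log (by positivity)).tendsto.comp
      Stirling.tendsto_stirlingSeq_sqrt_pi).sub_const (log √π)
  refine hlog.congr' ?_
  filter_upwards [eventually_ne_atTop 0] with n hn
  exact (stirlingErr_eq_log_stirlingSeq_sub hn).symm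

theorem antitone_stirlingErr_succ : Antitone fun k ↦ stirlingErr (k + 1) := by
  intro j k hjk
  simp only [stirlingErr_eq_log_stirlingSeq_sub (Nat.succ_ne_zero _)]
  exact sub_le_sub_right (Stirling.log_stirlingSeq'_antitone hjk) _

theorem stirlingErr_succ_nonneg (k : ℕ) : 0 ≤ stirlingErr (k + 1) :=
  antitone_stirlingErr_succ.le_of_tendsto
    (tendsto_stirlingErr_atTop.comp (tendsto_add_atTop_nat 1)) k

theorem eps_eq_stirlingErr_sub_succ (p : ℕ) : eps p = stirlingErr p - stirlingErr (p + 1) := by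
  -- At `p = 0` both sides are `-1`, thanks to `log 0 = 0` and `1 / 0 = 0`.
  rcases p.eq_zero_or_pos with rfl | hp
  · simp [eps, stirlingErr, sub_sub_eq_add_sub]
  have hp' : (p : ℝ) ≠ 0 := by positivity
  have hp1 : (p : ℝ) + 1 ≠ 0 := by positivity
  rw [eps, stirlingErr, stirlingErr, Nat.factorial_succ, Nat.cast_mul,
    log_mul (by positivity) (by positivity), log_div hp1 hp']
  push_cast
  ring

theorem summable_eps : Summable eps := by
  rw [← summable_nat_add_iff 1]
  refine summable_of_sum_range_le (c := stirlingErr 1) (fun k ↦ ?_) fun N ↦ ?_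
  · rw [eps_eq_stirlingErr_sub_succ, sub_nonneg]
    exact antitone_stirlingErr_succ k.le_succ
  · simp only [eps_eq_stirlingErr_sub_succ]
    rw [sum_range_sub' (fun k ↦ stirlingErr (k + 1))]
    simpa using stirlingErr_succ_nonneg N

theorem hasSum_eps_stirlingErr_general (n : ℕ) :
    HasSum (fun p : {p : ℕ // n ≤ p} => eps p) (stirlingErr n) := by
  have hsum : Summable fun k ↦ stirlingErr (k + n) - stirlingErr (k + 1 + n) := by
    simpa only [add_right_comm, eps_eq_stirlingErr_sub_succ] using
      (summable_nat_add_iff n).2 summable_eps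
  have htel := hasSum_sub_succ_of_tendsto (f := fun k ↦ stirlingErr (k + n)) hsum
    (tendsto_stirlingErr_atTop.comp (tendsto_add_atTop_nat n))
  rw [hasSum_subtype_le_iff]
  simpa only [eps_eq_stirlingErr_sub_succ, add_right_comm, zero_add, sub_zero] using htel

/-- For every positive integer `n`, the family `(ε_p)_{p ≥ n}` has sum `r_n`. -/
theorem hasSum_eps_stirlingErr (n : ℕ) (hn : 0 < n) :
    HasSum (fun p : {p : ℕ // n ≤ p} => eps p) (stirlingErr n) :=
  hasSum_eps_stirlingErr_general n
end

section
/- For every positive integer n, 1/(12n + 1) < r_n and r_n < 1/(12n). -/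
namespace RobbinsAux

open Real Filter Nat

/-- Abbreviation for `log (stirlingSeq n)`. -/
noncomputable def L (n : ℕ) : ℝ := Real.log (Stirling.stirlingSeq n)

lemma nat_pow_aux (k : ℕ) : 2 * k + 3 ≤ 3 ^ (k + 1) := by
  induction k with
  | zero => norm_num
  | succ k ih =>
    have h1 : 1 ≤ 3 ^ (k + 1) := Nat.one_le_pow _ _ (by norm_num)
    have h2 : 3 ^ (k + 1 + 1) = 3 * 3 ^ (k + 1) := by ring
    omega

lemma alg_upper (x : ℝ) (hx : 1 ≤ x) :
    (1/3 : ℝ) * ((1/(2*x+1))^2 * (1 - (1/(2*x+1))^2)⁻¹) = 1/(12*x) - 1/(12*(x+1)) := by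
  have h1 : (0:ℝ) < 2*x+1 := by linarith
  have h2 : (0:ℝ) < x := by linarith
  have h3 : (0:ℝ) < x+1 := by linarith
  have h4 : (1:ℝ) - (1/(2*x+1))^2 = (4*x*(x+1))/(2*x+1)^2 := by
    field_simp
    ring
  rw [h4]
  field_simp
  ring

lemma alg_lower (x : ℝ) (hx : 1 ≤ x) :
    ((1/(2*x+1))^2/3 : ℝ) * (1 - (1/(2*x+1))^2/3)⁻¹ = 1/(12*x^2+12*x+2) := by
  have h1 : (0:ℝ) < 2*x+1 := by linarith
  have h4 : (1:ℝ) - (1/(2*x+1))^2/3 = (3*(2*x+1)^2 - 1)/(3*(2*x+1)^2) := by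
    field_simp
  have h5 : (0:ℝ) < 3*(2*x+1)^2 - 1 := by nlinarith
  have h6 : (0:ℝ) < 12*x^2+12*x+2 := by nlinarith
  rw [h4]
  field_simp
  rw [div_eq_one_iff_eq (by nlinarith)]
  ring

lemma hasSum_L_diff (m : ℕ) :
    HasSum (fun k : ℕ => (1:ℝ)/(2*((k:ℝ)+1)+1) * ((1/(2*((m:ℝ)+1)+1))^2)^(k+1))
      (L (m+1) - L (m+2)) := by
  have h := Stirling.log_stirlingSeq_diff_hasSum m
  have he : (fun k : ℕ => (1:ℝ)/(2*((k:ℝ)+1)+1) * ((1/(2*((m:ℝ)+1)+1))^2)^(k+1))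
      = fun k : ℕ => (1:ℝ)/(2*(↑(k+1):ℝ)+1) * ((1/(2*(↑(m+1):ℝ)+1))^2)^(k+1) := by
    funext k
    push_cast
    ring
  rw [he]
  exact h

lemma upper_step (m : ℕ) :
    L (m + 1) - L (m + 2) < 1 / (12 * ((m : ℝ) + 1)) - 1 / (12 * ((m : ℝ) + 2)) := by
  set x : ℝ := (m : ℝ) + 1 with hxdef
  have hm0 : (0:ℝ) ≤ (m:ℝ) := Nat.cast_nonneg m
  have hx1 : (1:ℝ) ≤ x := by rw [hxdef]; linarith
  have hy0 : (0:ℝ) < (1/(2*x+1))^2 := by positivity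
  have hy1 : (1/(2*x+1))^2 < 1 := by
    have h1 : (1:ℝ)/(2*x+1) < 1 := by rw [div_lt_one (by linarith)]; linarith
    have h2 : (0:ℝ) ≤ 1/(2*x+1) := by positivity
    nlinarith
  have hsum := hasSum_L_diff m
  rw [← hxdef] at hsum
  have hgeo : HasSum (fun k : ℕ => (1/3:ℝ) * ((1/(2*x+1))^2)^(k+1))
      ((1/3) * ((1/(2*x+1))^2 * (1 - (1/(2*x+1))^2)⁻¹)) := by
    have h := (hasSum_geometric_of_lt_one hy0.le hy1).mul_left ((1/(2*x+1))^2)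
    simp_rw [← _root_.pow_succ'] at h
    exact h.mul_left _
  have hlt : L (m+1) - L (m+2) < (1/3) * ((1/(2*x+1))^2 * (1 - (1/(2*x+1))^2)⁻¹) := by
    refine hasSum_lt (i := 1) (fun k => ?_) ?_ hsum hgeo
    · have hk : (1:ℝ)/(2*((k:ℝ)+1)+1) ≤ 1/3 := by
        apply one_div_le_one_div_of_le (by norm_num)
        have : (0:ℝ) ≤ (k:ℝ) := Nat.cast_nonneg k
        linarith
      exact mul_le_mul_of_nonneg_right hk (by positivity)
    · have hy2 : (0:ℝ) < ((1/(2*x+1))^2)^(1+1) := by positivity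
      have h15 : (1:ℝ)/(2*(((1:ℕ):ℝ)+1)+1) = 1/5 := by norm_num
      rw [h15]
      nlinarith
  have he2 : (m:ℝ) + 2 = x + 1 := by rw [hxdef]; ring
  rw [he2]
  have := alg_upper x hx1
  linarith

lemma lower_step (m : ℕ) :
    1 / (12 * ((m : ℝ) + 1) + 1) - 1 / (12 * ((m : ℝ) + 2) + 1) < L (m + 1) - L (m + 2) := by
  set x : ℝ := (m : ℝ) + 1 with hxdef
  have hm0 : (0:ℝ) ≤ (m:ℝ) := Nat.cast_nonneg m
  have hx1 : (1:ℝ) ≤ x := by rw [hxdef]; linarith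
  have hy0 : (0:ℝ) < (1/(2*x+1))^2 := by positivity
  have hy1 : (1/(2*x+1))^2 < 1 := by
    have h1 : (1:ℝ)/(2*x+1) < 1 := by rw [div_lt_one (by linarith)]; linarith
    have h2 : (0:ℝ) ≤ 1/(2*x+1) := by positivity
    nlinarith
  have hsum := hasSum_L_diff m
  rw [← hxdef] at hsum
  have hy30 : (0:ℝ) ≤ (1/(2*x+1))^2/3 := by positivity
  have hy31 : (1/(2*x+1))^2/3 < 1 := by linarith
  have hgeo : HasSum (fun k : ℕ => ((1/(2*x+1))^2/3 : ℝ)^(k+1))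
      (((1/(2*x+1))^2/3) * (1 - (1/(2*x+1))^2/3)⁻¹) := by
    have h := (hasSum_geometric_of_lt_one hy30 hy31).mul_left ((1/(2*x+1))^2/3)
    simp_rw [← _root_.pow_succ'] at h
    exact h
  have hlt : ((1/(2*x+1))^2/3) * (1 - (1/(2*x+1))^2/3)⁻¹ < L (m+1) - L (m+2) := by
    refine hasSum_lt (i := 1) (fun k => ?_) ?_ hgeo hsum
    · have hfe : ((1/(2*x+1))^2/3 : ℝ)^(k+1) = (1/3:ℝ)^(k+1) * ((1/(2*x+1))^2)^(k+1) := by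
        rw [← mul_pow]
        congr 1
        ring
      rw [hfe]
      have hk : ((1:ℝ)/3)^(k+1) ≤ 1/(2*((k:ℝ)+1)+1) := by
        rw [div_pow, one_pow]
        apply one_div_le_one_div_of_le (by positivity)
        have hnat := nat_pow_aux k
        calc (2*((k:ℝ)+1)+1) = ((2*k+3 : ℕ) : ℝ) := by push_cast; ring
          _ ≤ ((3^(k+1) : ℕ) : ℝ) := Nat.cast_le.mpr hnat
          _ = (3:ℝ)^(k+1) := by push_cast; ring
      exact mul_le_mul_of_nonneg_right hk (by positivity)
    · have hy2 : (0:ℝ) < ((1/(2*x+1))^2)^(1+1) := by positivity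
      have h15 : (1:ℝ)/(2*(((1:ℕ):ℝ)+1)+1) = 1/5 := by norm_num
      rw [h15]
      have hfe : ((1/(2*x+1))^2/3 : ℝ)^(1+1) = (1/9:ℝ) * ((1/(2*x+1))^2)^(1+1) := by
        ring
      rw [hfe]
      nlinarith
  have heq := alg_lower x hx1
  have hfin : 1 / (12 * x + 1) - 1 / (12 * (x + 1) + 1) ≤ 1 / (12 * x ^ 2 + 12 * x + 2) := by
    have d1 : (0 : ℝ) < 12 * x + 1 := by linarith
    have d2 : (0 : ℝ) < 12 * (x + 1) + 1 := by linarith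
    have d3 : (0 : ℝ) < 12 * x ^ 2 + 12 * x + 2 := by positivity
    rw [div_sub_div _ _ d1.ne' d2.ne', div_le_div_iff₀ (by positivity) d3]
    nlinarith
  have he2 : (m:ℝ) + 2 = x + 1 := by rw [hxdef]; ring
  rw [he2]
  linarith

lemma tendsto_L : Tendsto L atTop (nhds (Real.log (Real.sqrt Real.pi))) :=
  Stirling.tendsto_stirlingSeq_sqrt_pi.log (by positivity)

lemma err_eq (n : ℕ) (hn : 0 < n) :
    stirlingErr n = L n - Real.log (Real.sqrt Real.pi) := by
  have hn' : (0 : ℝ) < n := Nat.cast_pos.mpr hn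
  rw [stirlingErr, L, Stirling.log_stirlingSeq_formula,
    Real.log_mul two_ne_zero hn'.ne', Real.log_div hn'.ne' (Real.exp_ne_zero 1),
    Real.log_exp,
    show Real.sqrt (2 * Real.pi) = Real.sqrt 2 * Real.sqrt Real.pi from
      Real.sqrt_mul (by norm_num) _,
    Real.log_mul (Real.sqrt_ne_zero'.mpr (by norm_num)) (Real.sqrt_ne_zero'.mpr Real.pi_pos),
    show Real.log (Real.sqrt 2) = 1 / 2 * Real.log 2 by
      rw [Real.log_sqrt (by norm_num)]; ring]
  ring

end RobbinsAux

/-- Robbins' bounds on the Stirling error term. -/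
theorem robbins_stirlingErr_bounds (n : ℕ) (hn : 0 < n) :
    1 / (12 * (n : ℝ) + 1) < stirlingErr n ∧ stirlingErr n < 1 / (12 * (n : ℝ)) := by
  classical
  open RobbinsAux Filter in
  set u : ℕ → ℝ := fun k => L k - 1 / (12 * (k : ℝ)) with hu
  set v : ℕ → ℝ := fun k => L k - 1 / (12 * (k : ℝ) + 1) with hv
  have h12 : Tendsto (fun k : ℕ => 12 * (k : ℝ)) atTop atTop :=
    Filter.Tendsto.const_mul_atTop (by norm_num) tendsto_natCast_atTop_atTop
  have hz : Tendsto (fun k : ℕ => 1 / (12 * (k : ℝ))) atTop (nhds 0) := by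
    simp only [one_div]
    exact h12.inv_tendsto_atTop
  have hz' : Tendsto (fun k : ℕ => 1 / (12 * (k : ℝ) + 1)) atTop (nhds 0) := by
    simp only [one_div]
    exact (tendsto_atTop_add_const_right atTop (1 : ℝ) h12).inv_tendsto_atTop
  have hun : Tendsto u atTop (nhds (Real.log (Real.sqrt Real.pi))) := by
    have h := tendsto_L.sub hz
    rw [sub_zero] at h
    exact h
  have hvn : Tendsto v atTop (nhds (Real.log (Real.sqrt Real.pi))) := by
    have h := tendsto_L.sub hz'
    rw [sub_zero] at h
    exact h
  have hstep_u : ∀ k, 1 ≤ k → u k < u (k + 1) := by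
    intro k hk
    obtain ⟨m, rfl⟩ : ∃ m, k = m + 1 := ⟨k - 1, by omega⟩
    have h := upper_step m
    have e1 : ((m + 1 : ℕ) : ℝ) = (m : ℝ) + 1 := by push_cast; ring
    have e2 : ((m + 1 + 1 : ℕ) : ℝ) = (m : ℝ) + 2 := by push_cast; ring
    have e3 : m + 1 + 1 = m + 2 := by omega
    simp only [hu, e1, e2, e3] at h ⊢
    linarith
  have hstep_v : ∀ k, 1 ≤ k → v (k + 1) < v k := by
    intro k hk
    obtain ⟨m, rfl⟩ : ∃ m, k = m + 1 := ⟨k - 1, by omega⟩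
    have h := lower_step m
    have e1 : ((m + 1 : ℕ) : ℝ) = (m : ℝ) + 1 := by push_cast; ring
    have e2 : ((m + 1 + 1 : ℕ) : ℝ) = (m : ℝ) + 2 := by push_cast; ring
    have e3 : m + 1 + 1 = m + 2 := by omega
    simp only [hv, e1, e2, e3] at h ⊢
    linarith
  have hmono_u : ∀ a, 1 ≤ a → ∀ k, a ≤ k → u a ≤ u k := by
    intro a ha k hk
    induction k, hk using Nat.le_induction with
    | base => exact le_refl _
    | succ k hk ih => exact ih.trans (hstep_u k (le_trans ha hk)).le
  have hmono_v : ∀ a, 1 ≤ a → ∀ k, a ≤ k → v k ≤ v a := by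
    intro a ha k hk
    induction k, hk using Nat.le_induction with
    | base => exact le_refl _
    | succ k hk ih => exact (hstep_v k (le_trans ha hk)).le.trans ih
  have hule : ∀ a, 1 ≤ a → u a ≤ Real.log (Real.sqrt Real.pi) := fun a ha =>
    ge_of_tendsto hun (Filter.eventually_atTop.2 ⟨a, hmono_u a ha⟩)
  have hvge : ∀ a, 1 ≤ a → Real.log (Real.sqrt Real.pi) ≤ v a := fun a ha =>
    le_of_tendsto hvn (Filter.eventually_atTop.2 ⟨a, hmono_v a ha⟩)
  have hu1 : u n < Real.log (Real.sqrt Real.pi) :=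
    lt_of_lt_of_le (hstep_u n hn) (hule (n + 1) (by omega))
  have hv1 : Real.log (Real.sqrt Real.pi) < v n :=
    lt_of_le_of_lt (hvge (n + 1) (by omega)) (hstep_v n hn)
  have herr := err_eq n hn
  simp only [hu] at hu1
  simp only [hv] at hv1
  exact ⟨by linarith, by linarith⟩
end

section
/- Let N_k(x) and D_k(x) be the real polynomials defined by the recurrence y_{k+1}(x) = (2k+1)·x·y_k(x) - k²·y_{k-1}(x) for k ≥ 1, with initial values N_0 = 0, N_1 = 1, D_0 = 1, D_1 = x (these are the numerators and denominators of the convergents of the continued fraction 1/x - 1²/3x - 2²/5x - 3²/7x - ⋯). Then for every k ≥ 0, N_k(x) = k!·P*_k(x) and D_k(x) = k!·P_k(x) as polynomial identities. -/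
open Polynomial

/-- Legendre polynomials: `(k+1)·y_{k+1}(x) = (2k+1)·x·y_k(x) - k·y_{k-1}(x)`,
`P_0 = 1`, `P_1 = x`. -/
noncomputable def legP : ℕ → Polynomial ℝ
  | 0 => 1
  | 1 => X
  | (k+2) => C ((2 * (k : ℝ) + 3) / ((k : ℝ) + 2)) * (X * legP (k+1))
      - C (((k : ℝ) + 1) / ((k : ℝ) + 2)) * legP k

/-- Associated (numerator) Legendre polynomials: same recurrence,
`P*_0 = 0`, `P*_1 = 1`. -/
noncomputable def legPs : ℕ → Polynomial ℝ
  | 0 => 0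
  | 1 => 1
  | (k+2) => C ((2 * (k : ℝ) + 3) / ((k : ℝ) + 2)) * (X * legPs (k+1))
      - C (((k : ℝ) + 1) / ((k : ℝ) + 2)) * legPs k

/-- Numerators of the convergents of `1/x - 1²/3x - 2²/5x - ⋯`:
`y_{k+1} = (2k+1)·x·y_k - k²·y_{k-1}`, `N_0 = 0`, `N_1 = 1`. -/
noncomputable def cfN : ℕ → Polynomial ℝ
  | 0 => 0
  | 1 => 1
  | (k+2) => C (2 * (k : ℝ) + 3) * (X * cfN (k+1)) - C (((k : ℝ) + 1)^2) * cfN k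

/-- Denominators of the convergents of `1/x - 1²/3x - 2²/5x - ⋯`:
`y_{k+1} = (2k+1)·x·y_k - k²·y_{k-1}`, `D_0 = 1`, `D_1 = x`. -/
noncomputable def cfD : ℕ → Polynomial ℝ
  | 0 => 1
  | 1 => X
  | (k+2) => C (2 * (k : ℝ) + 3) * (X * cfD (k+1)) - C (((k : ℝ) + 1)^2) * cfD k

lemma cf_aux (a b c d e f g : ℝ) (p q : Polynomial ℝ) (h1 : a * b = e * f)
    (h2 : c * d = e * g) :
    C a * (X * (C b * p)) - C c * (C d * q) = C e * (C f * (X * p) - C g * q) := by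
  have l1 : C a * (X * (C b * p)) = C (a * b) * (X * p) := by rw [C_mul]; ring
  have l2 : C c * (C d * q) = C (c * d) * q := by rw [C_mul]; ring
  rw [l1, l2, h1, h2, C_mul, C_mul]; ring

/-- For every `k`, `N_k = k! · P*_k` and `D_k = k! · P_k` as polynomial identities. -/
theorem cf_convergents_eq_factorial_smul_legendre (k : ℕ) :
    cfN k = C ((k.factorial : ℝ)) * legPs k ∧ cfD k = C ((k.factorial : ℝ)) * legP k := by
  induction k using Nat.twoStepInduction with
  | zero => simp [cfN, cfD, legPs, legP]
  | one => simp [cfN, cfD, legPs, legP]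
  | more k ih ih1 =>
    obtain ⟨hN, hD⟩ := ih
    obtain ⟨hN1, hD1⟩ := ih1
    have hk2 : ((k : ℝ) + 2) ≠ 0 := by positivity
    have hfac : ((k+2).factorial : ℝ) = ((k:ℝ)+2) * (((k+1).factorial : ℝ)) := by
      push_cast [Nat.factorial_succ]; ring
    have hfac1 : ((k+1).factorial : ℝ) = ((k:ℝ)+1) * ((k.factorial : ℝ)) := by
      push_cast [Nat.factorial_succ]; ring
    have h1 : (2 * (k:ℝ) + 3) * (((k+1).factorial : ℝ)) =
        ((k+2).factorial : ℝ) * ((2 * (k:ℝ) + 3) / ((k:ℝ) + 2)) := by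
      rw [hfac]; field_simp
    have h2 : (((k:ℝ) + 1)^2) * ((k.factorial : ℝ)) =
        ((k+2).factorial : ℝ) * (((k:ℝ) + 1) / ((k:ℝ) + 2)) := by
      rw [hfac, hfac1]; field_simp
    exact ⟨by rw [cfN, legPs, hN, hN1]; exact cf_aux _ _ _ _ _ _ _ _ _ h1 h2,
           by rw [cfD, legP, hD, hD1]; exact cf_aux _ _ _ _ _ _ _ _ _ h1 h2⟩
end

section
/- For every real number x with x > 1, the sequence of ratios P*_k(x)/P_k(x) converges, as k → ∞, to (1/2)·log((x+1)/(x-1)). -/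
open Polynomial Filter

lemma two_step {P : ℕ → Prop} (h0 : P 0) (h1 : P 1)
    (h : ∀ k, P k → P (k+1) → P (k+2)) : ∀ n, P n := by
  have key : ∀ n, P n ∧ P (n+1) := by
    intro n
    induction n with
    | zero => exact ⟨h0, h1⟩
    | succ k ih => exact ⟨ih.2, h k ih.1 ih.2⟩
  exact fun n => (key n).1

lemma legP_rec (k : ℕ) : C (((k : ℝ) + 2)) * legP (k+2)
    = C (2 * (k : ℝ) + 3) * (X * legP (k+1)) - C ((k : ℝ) + 1) * legP k := by
  have hk : ((k : ℝ) + 2) ≠ 0 := by positivity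
  have h1 : C (((k : ℝ) + 2)) * C ((2 * (k : ℝ) + 3) / ((k : ℝ) + 2)) = (C (2 * (k : ℝ) + 3) : Polynomial ℝ) := by
    rw [← C_mul, mul_div_cancel₀ _ hk]
  have h2 : C (((k : ℝ) + 2)) * C (((k : ℝ) + 1) / ((k : ℝ) + 2)) = (C ((k : ℝ) + 1) : Polynomial ℝ) := by
    rw [← C_mul, mul_div_cancel₀ _ hk]
  show C (((k : ℝ) + 2)) * (C ((2 * (k : ℝ) + 3) / ((k : ℝ) + 2)) * (X * legP (k+1))
      - C (((k : ℝ) + 1) / ((k : ℝ) + 2)) * legP k) = _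
  calc C (((k : ℝ) + 2)) * (C ((2 * (k : ℝ) + 3) / ((k : ℝ) + 2)) * (X * legP (k+1))
      - C (((k : ℝ) + 1) / ((k : ℝ) + 2)) * legP k)
      = (C (((k : ℝ) + 2)) * C ((2 * (k : ℝ) + 3) / ((k : ℝ) + 2))) * (X * legP (k+1))
        - (C (((k : ℝ) + 2)) * C (((k : ℝ) + 1) / ((k : ℝ) + 2))) * legP k := by ring
    _ = _ := by rw [h1, h2]

lemma legP_eval_rec (k : ℕ) (t : ℝ) :
    ((k : ℝ) + 2) * (legP (k+2)).eval t
      = (2 * (k : ℝ) + 3) * (t * (legP (k+1)).eval t) - ((k : ℝ) + 1) * (legP k).eval t := by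
  have := congrArg (fun p => Polynomial.eval t p) (legP_rec k)
  simpa using this

lemma legPs_eval_rec (k : ℕ) (t : ℝ) :
    ((k : ℝ) + 2) * (legPs (k+2)).eval t
      = (2 * (k : ℝ) + 3) * (t * (legPs (k+1)).eval t) - ((k : ℝ) + 1) * (legPs k).eval t := by
  have hk : ((k : ℝ) + 2) ≠ 0 := by positivity
  show ((k : ℝ) + 2) * (Polynomial.eval t (C ((2 * (k : ℝ) + 3) / ((k : ℝ) + 2)) * (X * legPs (k+1))
      - C (((k : ℝ) + 1) / ((k : ℝ) + 2)) * legPs k)) = _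
  simp only [eval_sub, eval_mul, eval_C, eval_X]
  field_simp

lemma legP_zero : legP 0 = 1 := rfl
lemma legP_one : legP 1 = X := rfl

lemma C_ne (k : ℕ) : (C ((k:ℝ) + 2) : Polynomial ℝ) ≠ 0 := by
  simp only [ne_eq, C_eq_zero]; positivity

/-- A and B identities. -/
lemma legP_AB (n : ℕ) :
    (legP (n+1)).derivative = X * (legP n).derivative + C ((n:ℝ)+1) * legP n
    ∧ X * (legP (n+1)).derivative = (legP n).derivative + C ((n:ℝ)+1) * legP (n+1) := by
  induction n with
  | zero => simp [legP_zero, legP_one]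
  | succ k ih =>
    obtain ⟨hA, hB⟩ := ih
    have hd := congrArg Polynomial.derivative (legP_rec k)
    simp only [derivative_sub, derivative_mul, derivative_X, derivative_C, one_mul, zero_mul,
      zero_add] at hd
    have hrec := legP_rec k
    push_cast
    simp only [map_add, map_mul, map_one, map_ofNat] at hd hrec hA hB ⊢
    constructor
    · apply mul_left_cancel₀ (C_ne k)
      simp only [map_add, map_mul, map_one, map_ofNat]
      linear_combination hd + (C (k:ℝ) + 1) * hB
    · apply mul_left_cancel₀ (C_ne k)
      simp only [map_add, map_mul, map_one, map_ofNat]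
      linear_combination X * hd + (2 * C (k:ℝ) + 3) * X * hB - (C (k:ℝ) + 2) * hA - (C (k:ℝ) + 2) * hrec

/-- Legendre ODE, polynomial form, for index `n+1`. -/
lemma legP_ODE (n : ℕ) :
    (X^2 - 1) * Polynomial.derivative (Polynomial.derivative (legP (n+1)))
      + 2 * X * Polynomial.derivative (legP (n+1))
    = C (((n:ℝ)+1) * ((n:ℝ)+2)) * legP (n+1) := by
  obtain ⟨hA, hB⟩ := legP_AB n
  have hE : (X^2 - 1) * Polynomial.derivative (legP (n+1))
      = C ((n:ℝ)+1) * (X * legP (n+1) - legP n) := by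
    linear_combination X * hB - hA
  have hd := congrArg Polynomial.derivative hE
  simp only [derivative_mul, derivative_sub, derivative_X, derivative_C, derivative_pow,
    derivative_one, derivative_X_pow, one_mul, zero_mul, zero_add, mul_one, sub_zero,
    Nat.cast_ofNat, pow_one] at hd
  simp only [map_add, map_mul, map_one, map_ofNat, pow_one] at hd hB ⊢
  linear_combination hd + (C (n:ℝ) + 1) * hB

/-- `P'_{m+2} - P'_m = (2m+3)·P_{m+1}`. -/
lemma legP_deriv_diff (m : ℕ) :
    Polynomial.derivative (legP (m+2)) = Polynomial.derivative (legP m)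
      + C (2*(m:ℝ)+3) * legP (m+1) := by
  obtain ⟨hA1, _⟩ := legP_AB (m+1)
  obtain ⟨_, hB0⟩ := legP_AB m
  push_cast at hA1
  simp only [map_add, map_mul, map_one, map_ofNat] at hA1 hB0 ⊢
  linear_combination hA1 + hB0

lemma legP_eval_one (n : ℕ) : (legP n).eval 1 = 1 := by
  induction n using two_step with
  | h0 => simp [legP_zero]
  | h1 => simp [legP_one]
  | h k ih1 ih2 =>
    have h := legP_eval_rec k 1
    rw [ih1, ih2] at h
    have hk : ((k:ℝ) + 2) ≠ 0 := by positivity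
    field_simp at h
    apply mul_left_cancel₀ hk
    rw [mul_one]
    linarith

lemma legP_eval_neg (n : ℕ) (t : ℝ) : (legP n).eval (-t) = (-1)^n * (legP n).eval t := by
  induction n using two_step generalizing t with
  | h0 => simp [legP_zero]
  | h1 => simp [legP_one]
  | h k ih1 ih2 =>
    have h1 := legP_eval_rec k (-t)
    have h2 := legP_eval_rec k t
    rw [ih1, ih2] at h1
    have hk : ((k:ℝ) + 2) ≠ 0 := by positivity
    apply mul_left_cancel₀ hk
    linear_combination h1 - (-1:ℝ)^k * h2


lemma legP_sq_le_one_of_nonneg (n : ℕ) (t : ℝ) (h0 : 0 ≤ t) (h1 : t ≤ 1) :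
    ((legP (n+1)).eval t)^2 ≤ 1 := by
  set p := legP (n+1) with hp
  set d := Polynomial.derivative p with hd
  set d2 := Polynomial.derivative d with hd2
  set c : ℝ := ((n:ℝ)+1) * ((n:ℝ)+2) with hc
  have hcpos : 0 < c := by positivity
  set V : ℝ → ℝ := fun x => (p.eval x)^2 + (1 - x^2) * (d.eval x)^2 / c with hV
  have hode : ∀ s : ℝ, (s^2 - 1) * d2.eval s + 2 * s * d.eval s = c * p.eval s := by
    intro s
    have := congrArg (Polynomial.eval s) (legP_ODE n)
    simpa [← hp, ← hd, ← hd2, ← hc] using this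
  have hder : ∀ s : ℝ, HasDerivAt V (2 * s * (d.eval s)^2 / c) s := by
    intro s
    have hp' : HasDerivAt (fun x => p.eval x) (d.eval s) s := p.hasDerivAt s
    have hdd : HasDerivAt (fun x => d.eval x) (d2.eval s) s := d.hasDerivAt s
    have h1' : HasDerivAt (fun x => (p.eval x)^2)
        ((2:ℕ) * (p.eval s)^(2-1) * d.eval s) s := hp'.pow 2
    have h2a : HasDerivAt (fun x : ℝ => 1 - x^2) (-((2:ℕ) * s^(2-1))) s :=
      (hasDerivAt_pow 2 s).const_sub 1
    have h2b : HasDerivAt (fun x => (d.eval x)^2)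
        ((2:ℕ) * (d.eval s)^(2-1) * d2.eval s) s := hdd.pow 2
    have h2 := (h2a.mul h2b).div_const c
    have hsum := h1'.add h2
    have heq : (2:ℕ) * (p.eval s)^(2-1) * d.eval s
        + (-((2:ℕ) * s^(2-1)) * (d.eval s)^2
          + (1 - s^2) * ((2:ℕ) * (d.eval s)^(2-1) * d2.eval s)) / c
        = 2 * s * (d.eval s)^2 / c := by
      have h := hode s
      field_simp
      linear_combination (-2) * eval s d * h
    rw [heq] at hsum
    exact hsum
  have hmono : MonotoneOn V (Set.Icc 0 1) := by
    apply monotoneOn_of_deriv_nonneg (convex_Icc 0 1)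
    · exact Continuous.continuousOn (by
        apply Continuous.add (by fun_prop)
        exact Continuous.div_const (by fun_prop) c)
    · intro x hx
      exact (hder x).differentiableAt.differentiableWithinAt
    · intro x hx
      rw [(hder x).deriv]
      have hx0 : 0 ≤ x := le_of_lt (by simpa using (Set.mem_Ioo.mp (by simpa using hx)).1)
      positivity
  have hVt : V t ≤ V 1 := hmono ⟨h0, h1⟩ ⟨zero_le_one, le_refl 1⟩ h1
  have hV1 : V 1 = 1 := by
    have hpe : p.eval 1 = 1 := legP_eval_one (n+1)
    simp [hV, hpe]
  have hno : (p.eval t)^2 ≤ V t := by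
    have : 0 ≤ (1 - t^2) * (d.eval t)^2 / c := by
      apply div_nonneg _ (le_of_lt hcpos)
      apply mul_nonneg _ (sq_nonneg _)
      nlinarith
    simp only [hV]
    linarith
  linarith

lemma legP_abs_le_one (n : ℕ) (t : ℝ) (h0 : -1 ≤ t) (h1 : t ≤ 1) :
    |(legP n).eval t| ≤ 1 := by
  have key : ∀ s : ℝ, 0 ≤ s → s ≤ 1 → |(legP n).eval s| ≤ 1 := by
    intro s hs0 hs1
    match n with
    | 0 => simp [legP_zero]
    | (m+1) =>
      rw [← sq_le_one_iff_abs_le_one]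
      exact legP_sq_le_one_of_nonneg m s hs0 hs1
  rcases le_or_gt 0 t with ht | ht
  · exact key t ht h1
  · have h := legP_eval_neg n (-t)
    rw [neg_neg] at h
    rw [h, abs_mul, abs_pow, abs_neg, abs_one, one_pow, one_mul]
    exact key (-t) (by linarith) (by linarith)

lemma legP_eval_neg_one (n : ℕ) : (legP n).eval (-1 : ℝ) = (-1)^n := by
  have := legP_eval_neg n 1
  rw [legP_eval_one] at this
  simpa using this

lemma integral_legP_succ (m : ℕ) :
    ∫ t in (-1:ℝ)..1, (legP (m+1)).eval t = 0 := by
  set q : Polynomial ℝ := legP (m+2) - legP m with hq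
  have hderiv : ∀ t : ℝ, HasDerivAt (fun s => q.eval s)
      ((2*(m:ℝ)+3) * (legP (m+1)).eval t) t := by
    intro t
    have h := q.hasDerivAt t
    have : q.derivative = C (2*(m:ℝ)+3) * legP (m+1) := by
      rw [hq, derivative_sub, legP_deriv_diff m]; ring
    rw [this] at h
    simpa using h
  have hint : IntervalIntegrable (fun t => (2*(m:ℝ)+3) * (legP (m+1)).eval t)
      MeasureTheory.volume (-1) 1 :=
    (Continuous.continuousOn (continuous_const.mul (Polynomial.continuous _))).intervalIntegrable
  have hftc := intervalIntegral.integral_eq_sub_of_hasDerivAt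
    (fun t _ => hderiv t) hint
  have hvals : q.eval (1:ℝ) - q.eval (-1:ℝ) = 0 := by
    simp [hq, legP_eval_one, legP_eval_neg_one, pow_succ]
  rw [hvals] at hftc
  rw [intervalIntegral.integral_const_mul] at hftc
  have h233 : (2*(m:ℝ)+3) ≠ 0 := by positivity
  exact (mul_eq_zero.mp hftc).resolve_left h233

section Qlayer

variable {x : ℝ}

lemma sub_pos_of_uIcc (hx : 1 < x) {t : ℝ} (ht : t ∈ Set.uIcc (-1:ℝ) 1) : 0 < x - t := by
  rw [Set.uIcc_of_le (by norm_num : (-1:ℝ) ≤ 1)] at ht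
  have := ht.2
  linarith

lemma intQ_integrable (hx : 1 < x) (p : Polynomial ℝ) :
    IntervalIntegrable (fun t => p.eval t / (x - t)) MeasureTheory.volume (-1) 1 := by
  apply ContinuousOn.intervalIntegrable
  apply ContinuousOn.div (Polynomial.continuous p).continuousOn
    (continuous_const.sub continuous_id).continuousOn
  intro t ht
  exact ne_of_gt (sub_pos_of_uIcc hx ht)

lemma intQ_zero (hx : 1 < x) :
    ∫ t in (-1:ℝ)..1, (1:ℝ) / (x - t) = Real.log (x+1) - Real.log (x-1) := by
  have hder : ∀ t ∈ Set.uIcc (-1:ℝ) 1,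
      HasDerivAt (fun s : ℝ => -Real.log (x - s)) (1 / (x - t)) t := by
    intro t ht
    have h1 : HasDerivAt (fun s : ℝ => x - s) (-1) t := (hasDerivAt_id t).const_sub x
    have h2 := ((Real.hasDerivAt_log (ne_of_gt (sub_pos_of_uIcc hx ht))).comp t h1).neg
    exact h2.congr_deriv (by ring)
  have hint : IntervalIntegrable (fun t : ℝ => 1 / (x - t)) MeasureTheory.volume (-1) 1 := by
    have := intQ_integrable hx (1 : Polynomial ℝ)
    simpa using this
  have hftc := intervalIntegral.integral_eq_sub_of_hasDerivAt hder hint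
  rw [hftc]
  have h1 : x - 1 > 0 := by linarith
  have h2 : x - (-1) = x + 1 := by ring
  rw [h2]
  ring

lemma intQ_one (hx : 1 < x) :
    ∫ t in (-1:ℝ)..1, t / (x - t) = x * (Real.log (x+1) - Real.log (x-1)) - 2 := by
  have hcong : Set.EqOn (fun t : ℝ => t / (x - t))
      (fun t : ℝ => x * (1 / (x - t)) - 1) (Set.uIcc (-1:ℝ) 1) := by
    intro t ht
    have hne := ne_of_gt (sub_pos_of_uIcc hx ht)
    field_simp
    ring
  rw [intervalIntegral.integral_congr hcong]
  have hint : IntervalIntegrable (fun t : ℝ => x * (1 / (x - t))) MeasureTheory.volume (-1) 1 := by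
    have := (intQ_integrable hx (1 : Polynomial ℝ)).const_mul x
    simpa using this
  rw [intervalIntegral.integral_sub hint intervalIntegrable_const,
    intervalIntegral.integral_const_mul, intQ_zero hx]
  simp
  ring

lemma intQ_rec (hx : 1 < x) (k : ℕ) :
    ((k:ℝ)+2) * ∫ t in (-1:ℝ)..1, (legP (k+2)).eval t / (x - t)
      = (2*(k:ℝ)+3) * x * (∫ t in (-1:ℝ)..1, (legP (k+1)).eval t / (x - t))
        - ((k:ℝ)+1) * ∫ t in (-1:ℝ)..1, (legP k).eval t / (x - t) := by
  have hcong : Set.EqOn (fun t : ℝ => ((k:ℝ)+2) * ((legP (k+2)).eval t / (x - t)))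
      (fun t : ℝ => (2*(k:ℝ)+3) * x * ((legP (k+1)).eval t / (x - t))
        - ((k:ℝ)+1) * ((legP k).eval t / (x - t))
        - (2*(k:ℝ)+3) * (legP (k+1)).eval t) (Set.uIcc (-1:ℝ) 1) := by
    intro t ht
    have hne := ne_of_gt (sub_pos_of_uIcc hx ht)
    have hrec := legP_eval_rec k t
    field_simp
    linear_combination hrec
  rw [← intervalIntegral.integral_const_mul, intervalIntegral.integral_congr hcong]
  have i2 := (intQ_integrable hx (legP (k+1))).const_mul ((2*(k:ℝ)+3) * x)
  have i3 := (intQ_integrable hx (legP k)).const_mul ((k:ℝ)+1)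
  have i4 : IntervalIntegrable (fun t : ℝ => (2*(k:ℝ)+3) * (legP (k+1)).eval t)
      MeasureTheory.volume (-1) 1 :=
    (Continuous.continuousOn (continuous_const.mul (Polynomial.continuous _))).intervalIntegrable
  rw [intervalIntegral.integral_sub (i2.sub i3) i4,
    intervalIntegral.integral_sub i2 i3,
    intervalIntegral.integral_const_mul, intervalIntegral.integral_const_mul,
    intervalIntegral.integral_const_mul, integral_legP_succ k]
  ring

lemma legPs_zero : legPs 0 = 0 := rfl
lemma legPs_one : legPs 1 = 1 := rfl

lemma intQ_eq (hx : 1 < x) (n : ℕ) :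
    ∫ t in (-1:ℝ)..1, (legP n).eval t / (x - t)
      = (Real.log (x+1) - Real.log (x-1)) * (legP n).eval x - 2 * (legPs n).eval x := by
  induction n using two_step with
  | h0 =>
    simp only [legP_zero, legPs_zero, eval_one, eval_zero, mul_one, mul_zero, sub_zero]
    simpa using intQ_zero hx
  | h1 =>
    simp only [legP_one, legPs_one, eval_X, eval_one, mul_one]
    rw [intQ_one hx]
    ring
  | h k ih1 ih2 =>
    have hk : ((k:ℝ) + 2) ≠ 0 := by positivity
    apply mul_left_cancel₀ hk
    rw [intQ_rec hx k, ih1, ih2]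
    have h1 := legP_eval_rec k x
    have h2 := legPs_eval_rec k x
    linear_combination 2 * h2 - (Real.log (x+1) - Real.log (x-1)) * h1

lemma intQ_bound (hx : 1 < x) (n : ℕ) :
    |∫ t in (-1:ℝ)..1, (legP n).eval t / (x - t)| ≤ 2 / (x - 1) := by
  have hx1 : 0 < x - 1 := by linarith
  have h := intervalIntegral.norm_integral_le_of_norm_le_const
    (C := 1 / (x - 1)) (f := fun t => (legP n).eval t / (x - t))
    (a := (-1:ℝ)) (b := 1) ?_
  · rw [Real.norm_eq_abs] at h
    calc |∫ t in (-1:ℝ)..1, (legP n).eval t / (x - t)| ≤ 1/(x-1) * |1 - (-1:ℝ)| := h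
      _ = 2 / (x-1) := by rw [show |1 - (-1:ℝ)| = 2 by norm_num]; ring
  · intro t ht
    rw [Set.uIoc_of_le (by norm_num : (-1:ℝ) ≤ 1)] at ht
    have ht1 : -1 ≤ t := le_of_lt ht.1
    have ht2 : t ≤ 1 := ht.2
    have hxt : 0 < x - t := by linarith
    rw [Real.norm_eq_abs, abs_div, abs_of_pos hxt]
    exact div_le_div₀ zero_le_one (legP_abs_le_one n t ht1 ht2) hx1 (by linarith)

lemma legP_pos_growth (hx : 1 < x) (n : ℕ) :
    0 < (legP n).eval x ∧ x * (legP n).eval x ≤ (legP (n+1)).eval x := by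
  have hx0 : (0:ℝ) < x := by linarith
  induction n with
  | zero => simp [legP_zero, legP_one]
  | succ k ih =>
    obtain ⟨h0, h1⟩ := ih
    have hpos : 0 < (legP (k+1)).eval x := lt_of_lt_of_le (by positivity) h1
    refine ⟨hpos, ?_⟩
    have hle : (legP k).eval x ≤ (legP (k+1)).eval x := by nlinarith
    have hrec := legP_eval_rec k x
    have hk0 : (0:ℝ) ≤ (k:ℝ) := Nat.cast_nonneg k
    nlinarith [mul_le_mul_of_nonneg_left hle (by positivity : (0:ℝ) ≤ (k:ℝ)+1),
      mul_pos (mul_pos (by positivity : (0:ℝ) < (k:ℝ)+1) (by linarith : (0:ℝ) < x - 1)) hpos]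

lemma legP_ge_pow (hx : 1 < x) (n : ℕ) : x^n ≤ (legP n).eval x := by
  have hx0 : (0:ℝ) < x := by linarith
  induction n with
  | zero => simp [legP_zero]
  | succ k ih =>
    have h := (legP_pos_growth hx k).2
    calc x^(k+1) = x * x^k := by ring
      _ ≤ x * (legP k).eval x := by nlinarith
      _ ≤ (legP (k+1)).eval x := h

end Qlayer


/-- For `x > 1`, the convergents `P*_k(x)/P_k(x)` tend to `(1/2)·log((x+1)/(x-1))`. -/
theorem legendre_convergents_tendsto (x : ℝ) (hx : 1 < x) :
    Tendsto (fun k : ℕ => (legPs k).eval x / (legP k).eval x) atTop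
      (nhds ((1/2) * Real.log ((x + 1) / (x - 1)))) := by
  set Λ : ℝ := Real.log (x+1) - Real.log (x-1) with hΛ
  have hx0 : (0:ℝ) < x := by linarith
  have hx1 : (0:ℝ) < x - 1 := by linarith
  have hppos : ∀ n, 0 < (legP n).eval x := fun n => (legP_pos_growth hx n).1
  set q : ℕ → ℝ := fun n => (∫ t in (-1:ℝ)..1, (legP n).eval t / (x - t)) / (2 * (legP n).eval x)
    with hq
  have hratio : ∀ n, (legPs n).eval x / (legP n).eval x = Λ / 2 - q n := by
    intro n
    have h := intQ_eq hx n
    have hp := hppos n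
    have hp' : (legP n).eval x ≠ 0 := ne_of_gt hp
    have hps : (legPs n).eval x
        = ((Real.log (x+1) - Real.log (x-1)) * (legP n).eval x
          - (∫ t in (-1:ℝ)..1, (legP n).eval t / (x - t))) / 2 := by
      linarith
    rw [hq, hps, hΛ]
    field_simp
  have hq0 : Tendsto q atTop (nhds 0) := by
    have hbound : ∀ n : ℕ, ‖q n‖ ≤ (fun n : ℕ => (1/(x-1)) * (x⁻¹)^n) n := by
      intro n
      have hb := intQ_bound hx n
      have hpow := legP_ge_pow hx n
      have hp := hppos n
      rw [hq, Real.norm_eq_abs, abs_div,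
        abs_of_pos (mul_pos two_pos hp)]
      have hxn : (0:ℝ) < x^n := by positivity
      calc |∫ t in (-1:ℝ)..1, (legP n).eval t / (x - t)| / (2 * (legP n).eval x)
          ≤ (2/(x-1)) / (2 * x^n) := by
            apply div_le_div₀ (by positivity) hb (by positivity)
            nlinarith
        _ = (1/(x-1)) * (x⁻¹)^n := by
            rw [inv_pow]
            field_simp
    have hlt : |x⁻¹| < 1 := by
      rw [abs_of_pos (by positivity), inv_lt_one_iff₀]
      right; exact hx
    exact squeeze_zero_norm hbound
      (by simpa using (tendsto_pow_atTop_nhds_zero_of_abs_lt_one hlt).const_mul (1/(x-1)))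
  have hfin : Tendsto (fun n => Λ / 2 - q n) atTop (nhds (Λ / 2 - 0)) :=
    tendsto_const_nhds.sub hq0
  rw [sub_zero] at hfin
  have hΛ2 : Λ / 2 = (1/2) * Real.log ((x + 1) / (x - 1)) := by
    rw [Real.log_div (by linarith) (by linarith)]
    ring
  rw [← hΛ2]
  exact hfin.congr (fun n => (hratio n).symm)
end

section
/- For every integer k ≥ 2 there exist real polynomials f*_k and f_k such that for every real number p ≥ 1 one has f_k(p·(p+1)) ≠ 0, P_k(2p+1) ≠ 0, and (2p+1)·P*_k(2p+1)/P_k(2p+1) - 1 = f*_k(p·(p+1)) / f_k(p·(p+1)). That is, p_k(2p+1) := (2p+1)·P*_k(2p+1)/P_k(2p+1) - 1 is a rational function of z = p(p+1). -/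
/-!
`P_k` has the parity of `k` and `P*_k` the opposite one, so `x · P*_k(x)` and `P_k(x)` are both
`x^(k mod 2)` times a polynomial in `x²`. In the quotient `x · P*_k(x) / P_k(x)` the factor
`x^(k mod 2)` cancels, leaving a ratio of polynomials in `x² = (2p+1)² = 4z + 1`.
The denominator does not vanish because `P_k(x) ≥ 1` for `x ≥ 1`.
-/

open Polynomial

/-- `p` is even or odd according as `n` is. -/
def HasParity {R : Type*} [CommSemiring R] (n : ℕ) (p : R[X]) : Prop :=
  ∃ a : R[X], p = X ^ (n % 2) * expand R 2 a

namespace HasParity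

variable {R : Type*} [CommRing R] {n : ℕ} {p q : R[X]}

theorem sub (hp : HasParity n p) (hq : HasParity n q) : HasParity n (p - q) := by
  obtain ⟨a, rfl⟩ := hp
  obtain ⟨b, rfl⟩ := hq
  exact ⟨a - b, by rw [map_sub, mul_sub]⟩

theorem C_mul (c : R) (hp : HasParity n p) : HasParity n (C c * p) := by
  obtain ⟨a, rfl⟩ := hp
  exact ⟨C c * a, by rw [map_mul, expand_C]; ring⟩

theorem X_mul (hp : HasParity n p) : HasParity (n + 1) (X * p) := by
  obtain ⟨a, rfl⟩ := hp
  rcases Nat.mod_two_eq_zero_or_one n with h | h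
  · exact ⟨a, by rw [h, Nat.succ_mod_two_eq_one_iff.mpr h]; ring⟩
  · refine ⟨X * a, ?_⟩
    rw [h, Nat.succ_mod_two_eq_zero_iff.mpr h, map_mul, expand_X]
    ring

theorem add_two (hp : HasParity n p) : HasParity (n + 2) p := by
  simpa only [HasParity, Nat.add_mod_right] using hp

end HasParity

theorem hasParity_legP (k : ℕ) : HasParity k (legP k) := by
  induction k using Nat.twoStepInduction with
  | zero => exact ⟨1, by simp [legP]⟩
  | one => exact ⟨1, by simp [legP]⟩
  | more k ih₀ ih₁ =>
    rw [legP]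
    exact (ih₁.X_mul.C_mul _).sub (ih₀.C_mul _).add_two

theorem hasParity_X_mul_legPs (k : ℕ) : HasParity k (X * legPs k) := by
  induction k using Nat.twoStepInduction with
  | zero => exact ⟨0, by simp [legPs]⟩
  | one => exact ⟨1, by simp [legPs]⟩
  | more k ih₀ ih₁ =>
    rw [legPs, mul_sub, mul_left_comm X (C _), mul_left_comm X (C _)]
    exact (ih₁.X_mul.C_mul _).sub (ih₀.C_mul _).add_two

theorem add_two_mul_eval_legP_add_two (k : ℕ) (x : ℝ) :
    ((k : ℝ) + 2) * (legP (k + 2)).eval x =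
      (2 * k + 3) * x * (legP (k + 1)).eval x - (k + 1) * (legP k).eval x := by
  simp only [legP, eval_sub, eval_mul, eval_C, eval_X]
  field_simp

theorem one_le_eval_legP_and_le_eval_succ (k : ℕ) {x : ℝ} (hx : 1 ≤ x) :
    1 ≤ (legP k).eval x ∧ (legP k).eval x ≤ (legP (k + 1)).eval x := by
  induction k with
  | zero => simp [legP, hx]
  | succ k ih =>
    obtain ⟨h_one_le, h_le_succ⟩ := ih
    refine ⟨h_one_le.trans h_le_succ, ?_⟩
    -- `(k+2) P_{k+2} ≥ (2k+3) P_{k+1} - (k+1) P_{k+1}`, using `x ≥ 1` and `P_k ≤ P_{k+1}`.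
    have h_rec := add_two_mul_eval_legP_add_two k x
    have h_x : 0 ≤ (2 * (k : ℝ) + 3) * ((x - 1) * (legP (k + 1)).eval x) :=
      mul_nonneg (by positivity)
        (mul_nonneg (sub_nonneg.mpr hx) (zero_le_one.trans (h_one_le.trans h_le_succ)))
    have h_prev : 0 ≤ ((k : ℝ) + 1) * ((legP (k + 1)).eval x - (legP k).eval x) :=
      mul_nonneg (by positivity) (sub_nonneg.mpr h_le_succ)
    have : ((k : ℝ) + 2) * (legP (k + 1)).eval x ≤ ((k : ℝ) + 2) * (legP (k + 2)).eval x := by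
      linarith
    exact le_of_mul_le_mul_left this (by positivity)

theorem one_le_eval_legP (k : ℕ) {x : ℝ} (hx : 1 ≤ x) : 1 ≤ (legP k).eval x :=
  (one_le_eval_legP_and_le_eval_succ k hx).1

theorem eval_two_mul_add_one_expand_two {R : Type*} [CommRing R] (a : R[X]) (p : R) :
    (expand R 2 a).eval (2 * p + 1) = (a.comp (C 4 * X + 1)).eval (p * (p + 1)) := by
  rw [expand_eval, eval_comp]
  simp only [eval_add, eval_mul, eval_C, eval_X, eval_one]
  congr 1
  ring

theorem legendre_ratio_rational_in_z_general (k : ℕ) :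
    ∃ fs f : Polynomial ℝ, ∀ p : ℝ, 1 ≤ p →
      f.eval (p * (p + 1)) ≠ 0 ∧ (legP k).eval (2*p + 1) ≠ 0 ∧
      (2*p + 1) * (legPs k).eval (2*p + 1) / (legP k).eval (2*p + 1) - 1 =
        fs.eval (p * (p + 1)) / f.eval (p * (p + 1)) := by
  obtain ⟨a, ha⟩ := hasParity_legP k
  obtain ⟨b, hb⟩ := hasParity_X_mul_legPs k
  refine ⟨b.comp (C 4 * X + 1) - a.comp (C 4 * X + 1), a.comp (C 4 * X + 1), fun p hp => ?_⟩
  have hP : (legP k).eval (2 * p + 1) ≠ 0 :=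
    (zero_lt_one.trans_le (one_le_eval_legP k (by linarith))).ne'
  have hP_eq := congrArg (eval (2 * p + 1)) ha
  have hPs_eq := congrArg (eval (2 * p + 1)) hb
  simp only [eval_mul, eval_pow, eval_X, eval_two_mul_add_one_expand_two] at hP_eq hPs_eq
  have hA : (a.comp (C 4 * X + 1)).eval (p * (p + 1)) ≠ 0 := right_ne_zero_of_mul (hP_eq ▸ hP)
  have hxk : (2 * p + 1) ^ (k % 2) ≠ 0 := left_ne_zero_of_mul (hP_eq ▸ hP)
  refine ⟨hA, hP, ?_⟩
  rw [eval_sub, ← div_sub_one hA, hP_eq, hPs_eq, mul_div_mul_left _ _ hxk]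

/-- For `k ≥ 2`, `p_k(2p+1) := (2p+1)·P*_k(2p+1)/P_k(2p+1) - 1` is a rational
function of `z = p(p+1)`. -/
theorem legendre_ratio_rational_in_z (k : ℕ) (hk : 2 ≤ k) :
    ∃ fs f : Polynomial ℝ, ∀ p : ℝ, 1 ≤ p →
      f.eval (p * (p + 1)) ≠ 0 ∧ (legP k).eval (2*p + 1) ≠ 0 ∧
      (2*p + 1) * (legPs k).eval (2*p + 1) / (legP k).eval (2*p + 1) - 1 =
        fs.eval (p * (p + 1)) / f.eval (p * (p + 1)) :=
  legendre_ratio_rational_in_z_general k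
end

section
/- For every real number p ≥ 1, with z := p·(p+1), the following closed forms hold for the convergents: (2p+1)·P*_2(2p+1)/P_2(2p+1) - 1 = 1/(12z + 2); (2p+1)·P*_3(2p+1)/P_3(2p+1) - 1 = 5/(60z + 6); and (2p+1)·P*_5(2p+1)/P_5(2p+1) - 1 = (630z + 77)/(7560z² + 1680z + 60). -/
open Polynomial

/-!
With `x = 2p + 1` one has `x² = 4z + 1` for `z = p(p + 1)`, and substituting this into the
explicit Legendre polynomials gives `P₂(x) = 6z + 1`, `P₃(x) = x(10z + 1)` and
`P₅(x) = x(126z² + 28z + 1)`, while `x P*₂(x)`, `P*₃(x)` and `P*₅(x)` are polynomials in `z`.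
After cancelling `x`, each closed form is a rational identity in `z` whose denominators are
positive for `z ≥ 0`.
-/

section ThreeTermRecurrence

variable (k : ℕ) (x : ℝ)

theorem eval_legP_add_two :
    ((k : ℝ) + 2) * (legP (k + 2)).eval x =
      (2 * k + 3) * x * (legP (k + 1)).eval x - (k + 1) * (legP k).eval x := by
  simp only [legP, eval_sub, eval_mul, eval_C, eval_X]
  field_simp

theorem eval_legPs_add_two :
    ((k : ℝ) + 2) * (legPs (k + 2)).eval x =
      (2 * k + 3) * x * (legPs (k + 1)).eval x - (k + 1) * (legPs k).eval x := by
  simp only [legPs, eval_sub, eval_mul, eval_C, eval_X]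
  field_simp

end ThreeTermRecurrence

section ExplicitForms

variable (x : ℝ)

theorem eval_legP_two : (legP 2).eval x = (3 * x ^ 2 - 1) / 2 := by
  have h := eval_legP_add_two 0 x
  simp only [zero_add, legP.eq_1, legP.eq_2, eval_one, eval_X] at h
  linear_combination h / 2

theorem eval_legP_three : (legP 3).eval x = (5 * x ^ 3 - 3 * x) / 2 := by
  have h := eval_legP_add_two 1 x
  rw [eval_legP_two, legP, eval_X] at h
  linear_combination h / 3

theorem eval_legP_four : (legP 4).eval x = (35 * x ^ 4 - 30 * x ^ 2 + 3) / 8 := by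
  have h := eval_legP_add_two 2 x
  rw [eval_legP_three, eval_legP_two] at h
  linear_combination h / 4

theorem eval_legP_five : (legP 5).eval x = (63 * x ^ 5 - 70 * x ^ 3 + 15 * x) / 8 := by
  have h := eval_legP_add_two 3 x
  rw [eval_legP_four, eval_legP_three] at h
  linear_combination h / 5

theorem eval_legPs_two : (legPs 2).eval x = 3 * x / 2 := by
  have h := eval_legPs_add_two 0 x
  simp only [zero_add, legPs.eq_1, legPs.eq_2, eval_zero, eval_one] at h
  linear_combination h / 2

theorem eval_legPs_three : (legPs 3).eval x = (15 * x ^ 2 - 4) / 6 := by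
  have h := eval_legPs_add_two 1 x
  rw [eval_legPs_two, legPs, eval_one] at h
  linear_combination h / 3

theorem eval_legPs_four : (legPs 4).eval x = (105 * x ^ 3 - 55 * x) / 24 := by
  have h := eval_legPs_add_two 2 x
  rw [eval_legPs_three, eval_legPs_two] at h
  linear_combination h / 4

theorem eval_legPs_five : (legPs 5).eval x = (945 * x ^ 4 - 735 * x ^ 2 + 64) / 120 := by
  have h := eval_legPs_add_two 3 x
  rw [eval_legPs_four, eval_legPs_three] at h
  linear_combination h / 5

end ExplicitForms

section Substitution

variable {x z : ℝ} (hx : x ^ 2 = 4 * z + 1)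
include hx

theorem eval_legP_two_of_sq : (legP 2).eval x = 6 * z + 1 := by
  rw [eval_legP_two]
  linear_combination (3 / 2) * hx

theorem mul_eval_legPs_two_of_sq : x * (legPs 2).eval x = (12 * z + 3) / 2 := by
  rw [eval_legPs_two]
  linear_combination (3 / 2) * hx

theorem eval_legP_three_of_sq : (legP 3).eval x = x * (10 * z + 1) := by
  rw [eval_legP_three]
  linear_combination (5 * x / 2) * hx

theorem eval_legPs_three_of_sq : (legPs 3).eval x = (60 * z + 11) / 6 := by
  rw [eval_legPs_three]
  linear_combination (5 / 2) * hx

theorem eval_legP_five_of_sq : (legP 5).eval x = x * (126 * z ^ 2 + 28 * z + 1) := by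
  rw [eval_legP_five]
  linear_combination (x / 8 * (63 * (x ^ 2 + 4 * z + 1) - 70)) * hx

theorem eval_legPs_five_of_sq :
    (legPs 5).eval x = (15120 * z ^ 2 + 4620 * z + 274) / 120 := by
  rw [eval_legPs_five]
  linear_combination ((945 * (x ^ 2 + 4 * z + 1) - 735) / 120) * hx

variable (hz : 0 ≤ z)
include hz

theorem ne_zero_of_sq_eq_four_mul_add_one : x ≠ 0 := by
  rintro rfl
  linarith

theorem convergent_two_of_sq :
    x * (legPs 2).eval x / (legP 2).eval x - 1 = 1 / (12 * z + 2) := by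
  rw [mul_eval_legPs_two_of_sq hx, eval_legP_two_of_sq hx]
  field_simp
  ring

theorem convergent_three_of_sq :
    x * (legPs 3).eval x / (legP 3).eval x - 1 = 5 / (60 * z + 6) := by
  rw [eval_legPs_three_of_sq hx, eval_legP_three_of_sq hx,
    mul_div_mul_left _ _ (ne_zero_of_sq_eq_four_mul_add_one hx hz)]
  field_simp
  ring

theorem convergent_five_of_sq :
    x * (legPs 5).eval x / (legP 5).eval x - 1 =
      (630 * z + 77) / (7560 * z ^ 2 + 1680 * z + 60) := by
  rw [eval_legPs_five_of_sq hx, eval_legP_five_of_sq hx,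
    mul_div_mul_left _ _ (ne_zero_of_sq_eq_four_mul_add_one hx hz)]
  field_simp
  ring

end Substitution

/-- Closed forms of the convergents `p_k(2p+1) = (2p+1)·P*_k(2p+1)/P_k(2p+1) - 1`
for `k = 2, 3, 5` in terms of `z = p(p+1)`. -/
theorem legendre_convergents_closed_forms (p : ℝ) (hp : 1 ≤ p) :
    (2*p + 1) * (legPs 2).eval (2*p + 1) / (legP 2).eval (2*p + 1) - 1 =
      1 / (12 * (p * (p + 1)) + 2) ∧
    (2*p + 1) * (legPs 3).eval (2*p + 1) / (legP 3).eval (2*p + 1) - 1 =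
      5 / (60 * (p * (p + 1)) + 6) ∧
    (2*p + 1) * (legPs 5).eval (2*p + 1) / (legP 5).eval (2*p + 1) - 1 =
      (630 * (p * (p + 1)) + 77) /
        (7560 * (p * (p + 1))^2 + 1680 * (p * (p + 1)) + 60) := by
  have hz : 0 ≤ p * (p + 1) := by positivity
  have hx : (2 * p + 1) ^ 2 = 4 * (p * (p + 1)) + 1 := by ring
  exact ⟨convergent_two_of_sq hx hz, convergent_three_of_sq hx hz, convergent_five_of_sq hx hz⟩
end

section
/- For every positive integer n, r_n > (1/12)/(n + (1/18)/n), and moreover (1/12)/(n + (1/18)/n) > 1/(12n + 1), so this lower bound improves Robbins' lower bound. -/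
lemma log_ratio_ge (t : ℝ) (ht : 0 < t) (ht3 : t ≤ 1/3) :
    2*t + 2*t^3/3 + 2*t^5/5 + 2*t^7/7 - 2*t^9/(1-t) ≤ Real.log ((1+t)/(1-t)) := by
  have h1 : |t| < 1 := by rw [abs_of_pos ht]; linarith
  have h2 : |(-t)| < 1 := by rwa [abs_neg]
  have A := (Real.abs_log_sub_add_sum_range_le h1 8).trans_eq (by rw [abs_of_pos ht])
  have B := (Real.abs_log_sub_add_sum_range_le h2 8).trans_eq
    (by rw [abs_neg, abs_of_pos ht])
  rw [sub_neg_eq_add] at B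
  simp only [Finset.sum_range_succ, Finset.sum_range_zero] at A B
  rw [abs_le] at A B
  obtain ⟨-, A2⟩ := A
  obtain ⟨B1, -⟩ := B
  rw [Real.log_div (by linarith) (by linarith)]
  have e1 : (0:ℝ) + t ^ 1 / (0 + 1) + t ^ 2 / (1 + 1) + t ^ 3 / (2 + 1) + t ^ 4 / (3 + 1)
      + t ^ 5 / (4 + 1) + t ^ 6 / (5 + 1) + t ^ 7 / (6 + 1) + t ^ 8 / (7 + 1)
      - (0 + (-t) ^ 1 / (0 + 1) + (-t) ^ 2 / (1 + 1) + (-t) ^ 3 / (2 + 1) + (-t) ^ 4 / (3 + 1)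
      + (-t) ^ 5 / (4 + 1) + (-t) ^ 6 / (5 + 1) + (-t) ^ 7 / (6 + 1) + (-t) ^ 8 / (7 + 1))
      = 2*t + 2*t^3/3 + 2*t^5/5 + 2*t^7/7 := by ring
  have e2 : (2:ℝ)*t^9/(1-t) = t^9/(1-t) + t^9/(1-t) := by ring
  linarith [A2, B1]

lemma poly_key (x : ℝ) (hx : 1 ≤ x) :
    (1/12)/(x + (1/18)/x) - (1/12)/((x+1) + (1/18)/(x+1)) <
      (1/(2*x+1))^2/3 + (1/(2*x+1))^4/5 + (1/(2*x+1))^6/7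
        - (1/(2*x+1))^8/(1-1/(2*x+1)) := by
  have hx0 : (0:ℝ) < x := by linarith
  have h1 : (0:ℝ) < 2*x+1 := by linarith
  have h2 : (0:ℝ) < x + 1 := by linarith
  have hD : 0 < 210*(2*x+1)^7*(2*x)*(18*x^2+1)*(18*(x+1)^2+1) := by positivity
  rw [← sub_pos]
  have key : (1/(2*x+1))^2/3 + (1/(2*x+1))^4/5 + (1/(2*x+1))^6/7
        - (1/(2*x+1))^8/(1-1/(2*x+1))
      - ((1/12)/(x + (1/18)/x) - (1/12)/((x+1) + (1/18)/(x+1)))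
      = (-3990 - 1534*x - 29440*x^2 + 47396*x^3 + 373168*x^4 + 647680*x^5
      + 597760*x^6 + 338688*x^7 + 96768*x^8)
        / (210*(2*x+1)^7*(2*x)*(18*x^2+1)*(18*(x+1)^2+1)) := by
    have hne1 : (2*x+1) ≠ 0 := ne_of_gt h1
    have hne2 : (1:ℝ) - 1/(2*x+1) ≠ 0 := by
      have : (1:ℝ) - 1/(2*x+1) = 2*x/(2*x+1) := by field_simp; ring
      rw [this]; positivity
    have hne3 : x + (1/18)/x ≠ 0 := by positivity
    have hne4 : (x+1) + (1/18)/(x+1) ≠ 0 := by positivity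
    field_simp
    ring
  rw [key]
  have hN : 0 < -3990 - 1534*x - 29440*x^2 + 47396*x^3 + 373168*x^4 + 647680*x^5
      + 597760*x^6 + 338688*x^7 + 96768*x^8 := by
    have h := sub_nonneg.mpr hx
    nlinarith [pow_nonneg h 2, pow_nonneg h 3, pow_nonneg h 4, pow_nonneg h 5,
      pow_nonneg h 6, pow_nonneg h 7, pow_nonneg h 8, h]
  positivity

lemma core_real (x : ℝ) (hx : 1 ≤ x) :
    (1/12)/(x + (1/18)/x) - (1/12)/((x+1) + (1/18)/(x+1)) <
      (x + 1/2) * Real.log ((x+1)/x) - 1 := by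
  have hx0 : (0:ℝ) < x := by linarith
  have h1 : (0:ℝ) < 2*x+1 := by linarith
  set t : ℝ := 1/(2*x+1) with hT
  have ht : 0 < t := by rw [hT]; positivity
  have ht3 : t ≤ 1/3 := by
    rw [hT, div_le_div_iff₀ h1 (by norm_num)]; linarith
  have ht1 : (0:ℝ) < 1 - t := by
    rw [hT]
    have : (1:ℝ) - 1/(2*x+1) = 2*x/(2*x+1) := by field_simp; ring
    rw [this]; positivity
  have hratio : (1+t)/(1-t) = (x+1)/x := by
    rw [hT]
    rw [div_eq_div_iff (by rw [hT] at ht1; exact ne_of_gt ht1) (ne_of_gt hx0)]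
    field_simp
    ring
  have hlog := log_ratio_ge t ht ht3
  rw [hratio] at hlog
  have hmul := mul_le_mul_of_nonneg_left hlog (show (0:ℝ) ≤ x + 1/2 by linarith)
  have hid : (x+1/2)*(2*t + 2*t^3/3 + 2*t^5/5 + 2*t^7/7 - 2*t^9/(1-t))
      = t^2/3 + t^4/5 + t^6/7 - t^8/(1-t) + 1 := by
    rw [hT]
    have hne1 : (2*x+1) ≠ 0 := ne_of_gt h1
    have hne2 : (1:ℝ) - 1/(2*x+1) ≠ 0 := by rw [← hT]; exact ne_of_gt ht1
    field_simp
    ring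
  have hp := poly_key x hx
  rw [← hT] at hp
  linarith

lemma stirlingErr_eq (n : ℕ) (hn : 0 < n) :
    stirlingErr n = Real.log (Stirling.stirlingSeq n) - Real.log (Real.sqrt Real.pi) := by
  have hn0 : (0:ℝ) < n := by exact_mod_cast hn
  rw [Stirling.log_stirlingSeq_formula, stirlingErr]
  rw [Real.log_mul (by norm_num) (ne_of_gt hn0),
    Real.log_div (ne_of_gt hn0) (Real.exp_ne_zero 1), Real.log_exp,
    Real.log_sqrt (by positivity), Real.log_sqrt Real.pi_pos.le,
    Real.log_mul (by norm_num) Real.pi_ne_zero]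
  ring

lemma stirlingErr_tendsto : Filter.Tendsto stirlingErr Filter.atTop (nhds 0) := by
  have h1 : Filter.Tendsto (fun n => Real.log (Stirling.stirlingSeq n))
      Filter.atTop (nhds (Real.log (Real.sqrt Real.pi))) :=
    ((Real.continuousAt_log (by positivity)).tendsto).comp Stirling.tendsto_stirlingSeq_sqrt_pi
  have h2 : Filter.Tendsto (fun n => Real.log (Stirling.stirlingSeq n)
      - Real.log (Real.sqrt Real.pi)) Filter.atTop (nhds 0) := by
    simpa using h1.sub_const (Real.log (Real.sqrt Real.pi))
  apply h2.congr'
  filter_upwards [Filter.eventually_gt_atTop 0] with n hn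
  exact (stirlingErr_eq n hn).symm

lemma stirlingErr_diff (n : ℕ) (hn : 0 < n) :
    stirlingErr n - stirlingErr (n+1)
      = ((n:ℝ) + 1/2) * Real.log (((n:ℝ)+1)/n) - 1 := by
  have hn0 : (0:ℝ) < n := by exact_mod_cast hn
  unfold stirlingErr
  rw [Nat.factorial_succ, Nat.cast_mul,
    Real.log_mul (by exact_mod_cast Nat.succ_ne_zero n)
      (by exact_mod_cast (Nat.factorial_pos n).ne'),
    Real.log_div (by positivity) (ne_of_gt hn0)]
  push_cast
  ring

noncomputable def lbF (n : ℕ) : ℝ := (1/12) / ((n : ℝ) + (1/18) / n)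

lemma lbF_tendsto : Filter.Tendsto lbF Filter.atTop (nhds 0) := by
  have h : Filter.Tendsto (fun m : ℕ => (m:ℝ) + (1/18)/m) Filter.atTop Filter.atTop :=
    Filter.tendsto_atTop_mono (fun m => le_add_of_nonneg_right (by positivity))
      tendsto_natCast_atTop_atTop
  have h2 := h.inv_tendsto_atTop.const_mul (1/12 : ℝ)
  rw [mul_zero] at h2
  apply h2.congr
  intro m
  simp only [Pi.inv_apply, lbF, div_eq_mul_inv, one_mul]

lemma F_step (m : ℕ) (hm : 0 < m) :
    stirlingErr (m+1) - lbF (m+1) < stirlingErr m - lbF m := by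
  have hx : (1:ℝ) ≤ m := by exact_mod_cast hm
  have hc := core_real (m:ℝ) hx
  have hd := stirlingErr_diff m hm
  have hcast : lbF (m+1) = (1/12)/(((m:ℝ)+1) + (1/18)/((m:ℝ)+1)) := by
    rw [lbF]; push_cast; ring_nf
  have hcast1 : lbF m = (1/12)/((m:ℝ) + (1/18)/(m:ℝ)) := rfl
  rw [hcast, hcast1]
  linarith

theorem stirlingErr_pos_sub (n : ℕ) (hn : 0 < n) : stirlingErr n - lbF n > 0 := by
  have hle : ∀ k, n+1 ≤ k → stirlingErr k - lbF k ≤ stirlingErr (n+1) - lbF (n+1) := by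
    intro k hk
    induction k, hk using Nat.le_induction with
    | base => exact le_refl _
    | succ k hk ih =>
        have := F_step k (by omega)
        linarith
  have h0 : 0 ≤ stirlingErr (n+1) - lbF (n+1) := by
    have ht := stirlingErr_tendsto.sub lbF_tendsto
    rw [sub_zero] at ht
    exact le_of_tendsto ht (Filter.eventually_atTop.2 ⟨n+1, hle⟩)
  have := F_step n hn
  linarith

/-- `r_n > (1/12)/(n + (1/18)/n)`, a lower bound improving Robbins' `1/(12n+1)`. -/
theorem stirlingErr_lower_bound_k2 (n : ℕ) (hn : 0 < n) :
    stirlingErr n > (1/12) / ((n : ℝ) + (1/18) / n) ∧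
      (1/12) / ((n : ℝ) + (1/18) / n) > 1 / (12 * (n : ℝ) + 1) := by
  have hx0 : (0:ℝ) < n := by exact_mod_cast hn
  have hx : (1:ℝ) ≤ n := by exact_mod_cast hn
  constructor
  · have := stirlingErr_pos_sub n hn
    rw [lbF] at this
    linarith
  · have hd1 : (0:ℝ) < (n:ℝ) + (1/18)/n :=
      add_pos_of_pos_of_nonneg hx0 (by positivity)
    have hd2 : (0:ℝ) < 12*(n:ℝ) + 1 := by linarith
    rw [gt_iff_lt, div_lt_div_iff₀ hd2 hd1]
    have h18 : (1/18 : ℝ)/n ≤ 1/18 := by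
      rw [div_le_iff₀ hx0]; linarith
    nlinarith
end
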